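/- arXiv:quant-ph/0312142 — 5 statements merged into one kernel-verified Lean document; each statement's English description precedes it below -/
import Mathlib

section
/- Let Ω be a topological group whose topology is induced by a left-invariant metric d (i.e., d(ωx, ωy) = d(x, y) for all ω, x, y ∈ Ω), and let ρ be a Borel probability measure on Ω. Suppose x, y ∈ Ω are distinct, set r = d(x, y) and m = min{ρ(B(x, r/5)), ρ(B(y, r/5))}. Then for every ω ∈ Ω, ρ(ω · B(x, r/5)) ≤ 1 − m. In particular, if both ρ(B(x, r/5)) > 0 and ρ(B(y, r/5)) > 0 (as holds when x and y lie in the support of ρ), then sup_{ω ∈ Ω} ρ(ω · B(x, r/5)) < 1. -/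
open MeasureTheory

/-- Let `Ω` be a group with a left-invariant metric and `ρ` a Borel probability measure.
If `x ≠ y`, `r = d(x,y)`, `m = min(ρ(B(x,r/5)), ρ(B(y,r/5)))`, then
`ρ(ω · B(x,r/5)) ≤ 1 − m` for all `ω`; in particular, if both balls have positive
`ρ`-measure, then `sup_ω ρ(ω · B(x,r/5)) < 1`. -/
theorem translate_ball_measure_le
    {Ω : Type*} [MetricSpace Ω] [Group Ω] [MeasurableSpace Ω] [BorelSpace Ω]
    (hinv : ∀ ω x y : Ω, dist (ω * x) (ω * y) = dist x y)
    (ρ : Measure Ω) [IsProbabilityMeasure ρ]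
    (x y : Ω) (hxy : x ≠ y) :
    (∀ ω : Ω,
      ρ ((fun t => ω * t) '' Metric.ball x (dist x y / 5))
        ≤ 1 - min (ρ (Metric.ball x (dist x y / 5))) (ρ (Metric.ball y (dist x y / 5)))) ∧
    (0 < ρ (Metric.ball x (dist x y / 5)) → 0 < ρ (Metric.ball y (dist x y / 5)) →
      (⨆ ω : Ω, ρ ((fun t => ω * t) '' Metric.ball x (dist x y / 5))) < 1) := by
  set r := dist x y with hr
  have hrpos : 0 < r := dist_pos.mpr hxy
  -- translate of ball is a ball
  have himg : ∀ ω : Ω, (fun t => ω * t) '' Metric.ball x (r / 5) =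
      Metric.ball (ω * x) (r / 5) := by
    intro ω
    ext z
    constructor
    · rintro ⟨t, ht, rfl⟩
      simpa [Metric.mem_ball, hinv] using ht
    · intro hz
      refine ⟨ω⁻¹ * z, ?_, by group⟩
      have : dist (ω * (ω⁻¹ * z)) (ω * x) = dist (ω⁻¹ * z) x := hinv ω _ _
      simp only [Metric.mem_ball] at hz ⊢
      rw [← this]
      simpa using hz
  have key : ∀ ω : Ω,
      ρ ((fun t => ω * t) '' Metric.ball x (r / 5))
        ≤ 1 - min (ρ (Metric.ball x (r / 5))) (ρ (Metric.ball y (r / 5))) := by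
    intro ω
    rw [himg ω]
    -- ball (ω*x) disjoint from ball x or ball y
    have hdisj : Disjoint (Metric.ball (ω * x) (r / 5)) (Metric.ball x (r / 5)) ∨
        Disjoint (Metric.ball (ω * x) (r / 5)) (Metric.ball y (r / 5)) := by
      by_contra h
      push_neg at h
      obtain ⟨h1, h2⟩ := h
      rw [Set.not_disjoint_iff] at h1 h2
      obtain ⟨a, ha1, ha2⟩ := h1
      obtain ⟨b, hb1, hb2⟩ := h2
      simp only [Metric.mem_ball] at ha1 ha2 hb1 hb2
      have : r ≤ dist x a + dist a (ω * x) + dist (ω * x) b + dist b y := by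
        calc r = dist x y := hr
        _ ≤ dist x b + dist b y := dist_triangle _ _ _
        _ ≤ (dist x (ω * x) + dist (ω * x) b) + dist b y := by
            have := dist_triangle x (ω * x) b; linarith
        _ ≤ dist x a + dist a (ω * x) + dist (ω * x) b + dist b y := by
            have := dist_triangle x a (ω * x); linarith
      have h1 : dist x a < r / 5 := by rwa [dist_comm]
      have h2 : dist a (ω * x) < r / 5 := ha1
      have h3 : dist (ω * x) b < r / 5 := by rwa [dist_comm] at hb1
      have h4 : dist b y < r / 5 := hb2
      linarith
    have hsum : ∀ s : Set Ω, MeasurableSet s →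
        Disjoint (Metric.ball (ω * x) (r / 5)) s →
        ρ (Metric.ball (ω * x) (r / 5)) ≤ 1 - ρ s := by
      intro s hs hd
      have : ρ (Metric.ball (ω * x) (r / 5)) + ρ s ≤ 1 := by
        rw [← measure_union hd hs]
        exact prob_le_one
      exact ENNReal.le_sub_of_add_le_right (measure_ne_top ρ s) this
    rcases hdisj with hd | hd
    · exact le_trans (hsum _ Metric.isOpen_ball.measurableSet hd)
        (tsub_le_tsub_left (min_le_left _ _) 1)
    · exact le_trans (hsum _ Metric.isOpen_ball.measurableSet hd)
        (tsub_le_tsub_left (min_le_right _ _) 1)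
  refine ⟨key, ?_⟩
  intro hx hy
  have hm : 0 < min (ρ (Metric.ball x (r / 5))) (ρ (Metric.ball y (r / 5))) :=
    lt_min hx hy
  calc (⨆ ω : Ω, ρ ((fun t => ω * t) '' Metric.ball x (r / 5)))
      ≤ 1 - min (ρ (Metric.ball x (r / 5))) (ρ (Metric.ball y (r / 5))) :=
        iSup_le key
    _ < 1 := ENNReal.sub_lt_self ENNReal.one_ne_top (one_ne_zero) hm.ne'
end

section
/- Let G be a locally compact, Hausdorff, second countable topological group which is not discrete, let μ be a left Haar measure on G, and let ρ be a Borel probability measure on G that is absolutely continuous with respect to μ. Then for every ε > 0 there exists a Borel set X ⊆ G with μ(X) > 0 such that ρ(ωX) < ε for every ω ∈ G; in particular sup_{ω ∈ G} ρ(ωX) < 1. -/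
open MeasureTheory ENNReal Filter Topology

/-!
Write `ρ = f μ` with `f = dρ/dμ ∈ L¹(μ)`. By absolute continuity of the integral there is `δ > 0`
with `ρ(A) < ε` whenever `μ(A) < δ`. Since `G` is not discrete, the Haar measure has no atoms, so
by outer regularity some open neighbourhood `X` of `1` has `μ(X) < δ`; it has positive measure
because Haar measures charge open sets. Left invariance gives `μ(ωX) = μ(X) < δ`, hence
`ρ(ωX) < ε`, for every `ω`.
-/

theorem nhdsNE_one_neBot_of_not_discreteTopology {G : Type*} [Group G] [TopologicalSpace G]
    [ContinuousMul G] (hG : ¬ DiscreteTopology G) : (𝓝[≠] (1 : G)).NeBot := by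
  rw [discreteTopology_iff_isOpen_singleton_one, isOpen_singleton_iff_punctured_nhds] at hG
  exact ⟨hG⟩

namespace MeasureTheory.Measure

variable {α : Type*} [MeasurableSpace α]

theorem AbsolutelyContinuous.exists_pos_forall_measure_lt {ρ μ : Measure α} [IsFiniteMeasure ρ]
    [SFinite μ] [ρ.HaveLebesgueDecomposition μ] (hρ : ρ ≪ μ) {ε : ℝ≥0∞} (hε : ε ≠ 0) :
    ∃ δ > 0, ∀ s, μ s < δ → ρ s < ε := by
  obtain ⟨δ, hδ, hsmall⟩ :=
    exists_pos_setLIntegral_lt_of_measure_lt (lintegral_rnDeriv_lt_top ρ μ).ne hε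
  exact ⟨δ, hδ, fun s hs => setLIntegral_rnDeriv hρ s ▸ hsmall s hs⟩

theorem exists_isOpen_mem_measure_lt [TopologicalSpace α] (μ : Measure α) [μ.OuterRegular]
    [NullSingletonClass μ] (x : α) {δ : ℝ≥0∞} (hδ : 0 < δ) :
    ∃ U, IsOpen U ∧ x ∈ U ∧ μ U < δ := by
  obtain ⟨U, hxU, hU, hUδ⟩ := Set.exists_isOpen_lt_of_lt {x} δ (by rwa [measure_singleton (μ := μ)])
  exact ⟨U, hU, hxU rfl, hUδ⟩

end MeasureTheory.Measure

/-- Let `G` be a non-discrete locally compact, Hausdorff, second countable group with left Haar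
measure `μ`, and `ρ` a Borel probability measure with `ρ ≪ μ`. Then for every `ε > 0` there is a
Borel set `X` with `μ(X) > 0` such that `ρ(ωX) < ε` for every `ω ∈ G`; in particular there is
such an `X` with `sup_ω ρ(ωX) < 1`. -/
theorem exists_translate_uniformly_small
    {G : Type*} [Group G] [TopologicalSpace G] [IsTopologicalGroup G]
    [LocallyCompactSpace G] [T2Space G] [SecondCountableTopology G]
    [MeasurableSpace G] [BorelSpace G]
    (hG : ¬ DiscreteTopology G)
    (μ : Measure G) [μ.IsHaarMeasure]
    (ρ : Measure G) [IsProbabilityMeasure ρ] (hρ : ρ ≪ μ) :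
    (∀ ε : ℝ≥0∞, 0 < ε → ∃ X : Set G, MeasurableSet X ∧ 0 < μ X ∧
      ∀ ω : G, ρ ((fun t => ω * t) '' X) < ε) ∧
    (∃ X : Set G, MeasurableSet X ∧ 0 < μ X ∧
      (⨆ ω : G, ρ ((fun t => ω * t) '' X)) < 1) := by
  have := nhdsNE_one_neBot_of_not_discreteTopology hG
  have uniformly_small : ∀ ε : ℝ≥0∞, 0 < ε → ∃ X : Set G, MeasurableSet X ∧ 0 < μ X ∧
      ∀ ω : G, ρ ((fun t => ω * t) '' X) < ε := by
    intro ε hε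
    obtain ⟨δ, hδ, hρ_small⟩ := hρ.exists_pos_forall_measure_lt hε.ne'
    obtain ⟨X, hX, h1X, hXδ⟩ := μ.exists_isOpen_mem_measure_lt 1 hδ
    refine ⟨X, hX.measurableSet, hX.measure_pos μ ⟨1, h1X⟩, fun ω => hρ_small _ ?_⟩
    rwa [Set.image_mul_left, measure_preimage_mul]
  refine ⟨uniformly_small, ?_⟩
  obtain ⟨X, hXm, hXpos, hX⟩ := uniformly_small 2⁻¹ (by simp)
  exact ⟨X, hXm, hXpos, (iSup_le fun ω => (hX ω).le).trans_lt (by norm_num)⟩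
end

section
/- Let ρ be a Borel probability measure on ℝ whose Fourier–Stieltjes transform ρ̂(ξ) = ∫ e^{−iξx} dρ(x) vanishes on some nonempty open subset of ℝ. Then there exists an integrable function F ∈ L¹(ℝ; ℂ) which is not almost everywhere zero, such that the convolution of F with ρ vanishes: (F ∗ ρ)(x) = ∫ F(x − y) dρ(y) = 0 for almost every x ∈ ℝ. -/
/-!
Pick a nonzero Schwartz function `f` supported where `ξ ↦ ρ̂(-2πξ)` vanishes and put `F = 𝓕 f`.
By Fubini, `F ∗ ρ = 𝓕 (ρ̂(-2π ·) · f) = 0`, while `F` is integrable and, being continuous with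
`𝓕⁻ F = f ≠ 0`, not almost everywhere zero.
-/

open MeasureTheory Complex FourierTransform Real
open scoped RealInnerProductSpace SchwartzMap

theorem exists_schwartzMap_ne_zero_support_subset {V : Type*} [NormedAddCommGroup V]
    [NormedSpace ℝ V] [FiniteDimensional ℝ V] {S : Set V} (hS : IsOpen S) (hne : S.Nonempty) :
    ∃ f : 𝓢(V, ℂ), f ≠ 0 ∧ Function.support f ⊆ S := by
  obtain ⟨x, hx⟩ := hne
  obtain ⟨u, hu_supp, hu_cpt, hu_smooth, -, hux⟩ :=
    exists_contDiff_tsupport_subset (n := ⊤) (hS.mem_nhds hx)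
  refine ⟨(hu_cpt.comp_left ofReal_zero).toSchwartzMap (ofRealCLM.contDiff.comp hu_smooth),
    fun h ↦ ?_, ?_⟩
  · have : (u x : ℂ) = 0 := congr($h x)
    simp [hux] at this
  · exact (Function.support_comp_subset ofReal_zero u).trans
      ((subset_tsupport u).trans hu_supp)

section

variable {V : Type*} [NormedAddCommGroup V] [InnerProductSpace ℝ V] [MeasurableSpace V]

theorem charFun_two_pi_smul (ρ : Measure V) (w : V) :
    charFun ρ ((2 * π) • w) = ∫ y, (𝐞 ⟪y, w⟫ : ℂ) ∂ρ := by
  simp [charFun_apply, inner_smul_right, Real.fourierChar_apply]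

variable [BorelSpace V] [FiniteDimensional ℝ V]
  {E : Type*} [NormedAddCommGroup E] [NormedSpace ℂ E] [CompleteSpace E]

theorem integral_fourier_sub_eq_fourier_charFun_smul (ρ : Measure V) [IsFiniteMeasure ρ]
    {g : V → E} (hg : Integrable g) (x : V) :
    ∫ y, 𝓕 g (x - y) ∂ρ = 𝓕 (fun w ↦ charFun ρ ((2 * π) • w) • g w) x := by
  have hint : Integrable (Function.uncurry fun y w ↦ 𝐞 (-⟪w, x - y⟫) • g w) (ρ.prod volume) := by
    refine (hg.comp_snd ρ).mono ?_ (.of_forall fun p ↦ (Circle.norm_smul _ _).le)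
    exact (Continuous.aestronglyMeasurable (by fun_prop)).smul hg.aestronglyMeasurable.comp_snd
  have hchar (w y : V) : (𝐞 (-⟪w, x - y⟫) : ℂ) = 𝐞 (-⟪w, x⟫) * 𝐞 ⟪y, w⟫ := by
    rw [inner_sub_right, real_inner_comm y, neg_sub, sub_eq_neg_add, AddChar.map_add_eq_mul,
      Circle.coe_mul]
  simp only [fourier_eq]
  rw [integral_integral_swap hint]
  simp only [Circle.smul_def, hchar, integral_smul_const, integral_const_mul, charFun_two_pi_smul,
    smul_smul]

theorem SchwartzMap.fourier_ae_eq_zero_iff {f : 𝓢(V, E)} :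
    𝓕 (f : V → E) =ᵐ[volume] 0 ↔ f = 0 := by
  refine ⟨fun h ↦ ?_, fun h ↦ .of_forall fun x ↦ by simp [h, fourier_eq]⟩
  have : 𝓕 f = 0 := by
    ext x
    exact congr_fun ((Continuous.ae_eq_iff_eq volume (𝓕 f).continuous continuous_zero).1 h) x
  simpa using congr(𝓕⁻ $this)

end

/-- If the Fourier–Stieltjes transform `ρ̂(ξ) = ∫ e^{−iξx} dρ(x)` of a Borel probability measure
`ρ` on `ℝ` vanishes on a nonempty open set, then there is a nonzero `F ∈ L¹(ℝ; ℂ)` with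
`(F ∗ ρ)(x) = ∫ F(x−y) dρ(y) = 0` for almost every `x`. -/
theorem exists_nonzero_conv_zero_of_fourier_vanishes
    (ρ : Measure ℝ) [IsProbabilityMeasure ρ]
    (hρ : ∃ U : Set ℝ, IsOpen U ∧ U.Nonempty ∧
      ∀ ξ ∈ U, (∫ x, Complex.exp (-(ξ * x) * Complex.I) ∂ρ) = 0) :
    ∃ F : ℝ → ℂ, Integrable F volume ∧ ¬ (F =ᵐ[volume] 0) ∧
      ∀ᵐ x : ℝ ∂volume, (∫ y, F (x - y) ∂ρ) = 0 := by
  obtain ⟨U, hU, ⟨ξ₀, hξ₀⟩, hvan⟩ := hρ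
  have hcharFun : ∀ ξ, -ξ ∈ U → charFun ρ ξ = 0 := fun ξ hξ ↦ by
    simpa [charFun_apply_real] using hvan _ hξ
  obtain ⟨f, hf, hf_supp⟩ := exists_schwartzMap_ne_zero_support_subset
    (S := (fun w : ℝ ↦ -((2 * π) • w)) ⁻¹' U) (hU.preimage (by fun_prop)) ⟨-(ξ₀ / (2 * π)), by
      rwa [Set.mem_preimage, smul_neg, neg_neg, smul_eq_mul, mul_div_cancel₀ _ two_pi_pos.ne']⟩
  refine ⟨𝓕 (f : ℝ → ℂ), (𝓕 f).integrable, mt SchwartzMap.fourier_ae_eq_zero_iff.1 hf,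
    .of_forall fun x ↦ ?_⟩
  have hprod : (fun w ↦ charFun ρ ((2 * π) • w) • f w) = 0 := by
    ext w
    by_cases hw : f w = 0
    · simp [hw]
    · rw [hcharFun _ (hf_supp hw), zero_smul, Pi.zero_apply]
  rw [integral_fourier_sub_eq_fourier_charFun_smul ρ f.integrable, hprod]
  simp [fourier_eq]
end

section
/- Let ρ be a Borel probability measure on ℝ whose Fourier–Stieltjes transform ρ̂(ξ) = ∫ e^{−iξx} dρ(x) vanishes on some nonempty open subset of ℝ. Then there exist two distinct Borel probability measures m₁ ≠ m₂ on ℝ, each absolutely continuous with respect to Lebesgue measure with density in L¹(ℝ), such that m₁ ∗ ρ = m₂ ∗ ρ. -/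
open MeasureTheory

noncomputable def Sker (b t : ℝ) : ℝ := if t = 0 then 2*b else 2 * Real.sin (b*t) / t

lemma Sker_meas (b : ℝ) : Measurable (Sker b) := by
  unfold Sker
  apply Measurable.ite (measurableSet_eq_fun measurable_id measurable_const)
  · exact measurable_const
  · exact ((measurable_const.mul measurable_id).sin.const_mul 2).div measurable_id

lemma Sker_abs_le (b t : ℝ) (hb : 0 ≤ b) : |Sker b t| ≤ 2*b := by
  unfold Sker
  split_ifs with h
  · rw [_root_.abs_of_nonneg (by linarith)]
  · rw [abs_div]
    rw [div_le_iff₀ (abs_pos.mpr h)]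
    calc |2 * Real.sin (b*t)| = 2 * |Real.sin (b*t)| := by rw [abs_mul]; norm_num
    _ ≤ 2 * |b*t| := by nlinarith [Real.abs_sin_le_abs (x := b*t), abs_nonneg (Real.sin (b*t))]
    _ = 2*b*|t| := by rw [abs_mul, _root_.abs_of_nonneg hb]; ring

lemma Sker_sq_le_bound (b t : ℝ) (hb : 0 ≤ b) : (Sker b t)^2 ≤ (2*b)^2 := by
  have h := Sker_abs_le b t hb
  obtain ⟨h1, h2⟩ := abs_le.mp h
  nlinarith

lemma integral_exp_Icc (b t : ℝ) (hb : 0 < b) :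
    ∫ ξ in Set.Icc (-b) b, Complex.exp (ξ * t * Complex.I) = (Sker b t : ℂ) := by
  rw [integral_Icc_eq_integral_Ioc, ← intervalIntegral.integral_of_le (by linarith)]
  unfold Sker
  by_cases h : t = 0
  · subst h
    push_cast
    simp
    ring
  · have hc : (t : ℂ) * Complex.I ≠ 0 := by
      simp [Complex.ext_iff, h]
    have : ∀ ξ : ℝ, (ξ:ℂ) * t * Complex.I = ((t:ℂ)*Complex.I) * ξ := by intro ξ; ring
    simp_rw [this]
    rw [integral_exp_mul_complex hc, if_neg h]
    push_cast
    rw [Complex.sin]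
    rw [div_eq_div_iff hc (Complex.ofReal_ne_zero.mpr h)]
    have e1 : (t:ℂ)*Complex.I*b = (b:ℂ)*t*Complex.I := by ring
    have e2 : (t:ℂ)*Complex.I*(-b) = -((b:ℂ)*t)*Complex.I := by ring
    rw [e1, e2]
    field_simp
    ring_nf
    rw [Complex.I_sq]
    ring

lemma Sker_sq_le (b t : ℝ) (hb : 0 ≤ b) :
    (Sker b t)^2 ≤ (max (8*b^2) 8) * (1 + t^2)⁻¹ := by
  have h1 : (Sker b t)^2 ≤ 4*b^2 := by
    have := Sker_abs_le b t hb
    nlinarith [abs_nonneg (Sker b t), _root_.sq_abs (Sker b t)]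
  rcases le_or_gt (t^2) 1 with ht | ht
  · have h3 : (Sker b t)^2 * (1 + t^2) ≤ 8*b^2 := by nlinarith
    calc (Sker b t)^2 = (Sker b t)^2 * (1+t^2) * (1+t^2)⁻¹ := by field_simp
    _ ≤ (8*b^2) * (1+t^2)⁻¹ := by gcongr
    _ ≤ max (8*b^2) 8 * (1+t^2)⁻¹ := by gcongr; exact le_max_left _ _
  · have htne : t ≠ 0 := by intro h; rw [h] at ht; simp at ht; linarith
    have h2 : (Sker b t)^2 ≤ 4 / t^2 := by
      unfold Sker
      rw [if_neg htne, div_pow, div_le_div_iff₀ (by positivity) (by positivity)]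
      nlinarith [Real.sin_sq_le_one (b*t)]
    have h4 : (Sker b t)^2 * (1 + t^2) ≤ 8 := by
      nlinarith [sq_nonneg (Sker b t), sq_nonneg t, div_nonneg (by norm_num : (0:ℝ) ≤ 4) (sq_nonneg t),
        mul_le_mul_of_nonneg_right h2 (by positivity : (0:ℝ) ≤ 1 + t^2),
        div_mul_cancel₀ (4:ℝ) (by positivity : t^2 ≠ 0)]
    calc (Sker b t)^2 = (Sker b t)^2 * (1+t^2) * (1+t^2)⁻¹ := by field_simp
    _ ≤ 8 * (1+t^2)⁻¹ := by gcongr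
    _ ≤ max (8*b^2) 8 * (1+t^2)⁻¹ := by gcongr; exact le_max_right _ _

lemma Sker_sq_integrable (b : ℝ) (hb : 0 ≤ b) : Integrable (fun t => (Sker b t)^2) volume := by
  apply Integrable.mono' (integrable_inv_one_add_sq.const_mul (max (8*b^2) 8))
  · exact ((Sker_meas b).pow_const 2).aestronglyMeasurable
  · filter_upwards with t
    rw [Real.norm_eq_abs, _root_.abs_of_nonneg (sq_nonneg _)]
    exact Sker_sq_le b t hb

lemma Sker_sq_integral_pos (b : ℝ) (hb : 0 < b) : 0 < ∫ t, (Sker b t)^2 := by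
  rw [integral_pos_iff_support_of_nonneg_ae
    (Filter.Eventually.of_forall (fun t => sq_nonneg _)) (Sker_sq_integrable b hb.le)]
  have hsub : Set.Ioo 0 (Real.pi / b) ⊆ Function.support (fun t => (Sker b t)^2) := by
    intro t ⟨ht0, htpi⟩
    have hbt : 0 < b*t := by positivity
    have hlt : b*t < Real.pi := by
      have := (lt_div_iff₀' hb).mp htpi
      linarith
    have hsin : 0 < Real.sin (b*t) := Real.sin_pos_of_pos_of_lt_pi hbt hlt
    simp only [Function.mem_support]
    unfold Sker
    rw [if_neg (ne_of_gt ht0)]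
    positivity
  calc (0:ENNReal) < volume (Set.Ioo 0 (Real.pi/b)) := by
        rw [Real.volume_Ioo]; simp [ENNReal.ofReal_pos]; positivity
  _ ≤ _ := measure_mono hsub

lemma norm_exp_rmul_I (r s : ℝ) : ‖Complex.exp (↑r * ↑s * Complex.I)‖ = 1 := by
  rw [show ((r:ℂ) * s * Complex.I) = ((r*s : ℝ):ℂ) * Complex.I by push_cast; ring]
  exact Complex.norm_exp_ofReal_mul_I _

lemma key_conv_zero (ρ : Measure ℝ) [IsProbabilityMeasure ρ] (b ξ₀ : ℝ) (hb : 0 < b)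
    (hvan : ∀ θ ∈ Set.Icc (ξ₀-2*b) (ξ₀+2*b),
      (∫ y, Complex.exp (-(↑θ * ↑y) * Complex.I) ∂ρ) = 0)
    (x : ℝ) :
    ∫ y, (Sker b (x-y))^2 * Real.cos (ξ₀*(x-y)) ∂ρ = 0 := by
  set μb := volume.restrict (Set.Icc (-b) b) with hμb
  haveI : IsFiniteMeasure μb := by
    constructor
    rw [hμb, Measure.restrict_apply_univ]
    exact measure_Icc_lt_top
  set Φ : ℝ → ℂ := fun y => ((Sker b (x-y) : ℂ))^2 * Complex.exp (↑(ξ₀*(x-y)) * Complex.I)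
    with hΦ
  have hΦmeas : Measurable Φ := by
    apply Measurable.mul
    · exact (Complex.measurable_ofReal.comp ((Sker_meas b).comp
        (measurable_const.sub measurable_id))).pow_const 2
    · exact Measurable.cexp ((Complex.measurable_ofReal.comp
        ((measurable_const.sub measurable_id).const_mul ξ₀)).mul measurable_const)
  have hΦint : Integrable Φ ρ := by
    apply Integrable.mono' (integrable_const ((2*b)^2)) hΦmeas.aestronglyMeasurable
    filter_upwards with y
    rw [hΦ]
    simp only [norm_mul, norm_pow]
    rw [show ((↑(ξ₀*(x-y)):ℂ) * Complex.I) = ↑(ξ₀*(x-y)) * Complex.I from rfl]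
    rw [Complex.norm_exp_ofReal_mul_I, mul_one, Complex.norm_real, Real.norm_eq_abs]
    exact pow_le_pow_left₀ (abs_nonneg _) (Sker_abs_le b _ hb.le) 2
  have hre : ∀ y, (Sker b (x-y))^2 * Real.cos (ξ₀*(x-y)) = (Φ y).re := by
    intro y
    rw [hΦ]
    simp only
    rw [show ((Sker b (x-y) : ℂ))^2 = ((((Sker b (x-y))^2 : ℝ)) : ℂ) by push_cast; ring]
    rw [Complex.re_ofReal_mul, Complex.exp_ofReal_mul_I_re]
  simp_rw [hre]
  suffices hmain : ∫ y, Φ y ∂ρ = 0 by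
    calc ∫ y, (Φ y).re ∂ρ = (∫ y, Φ y ∂ρ).re :=
          ContinuousLinearMap.integral_comp_comm Complex.reCLM hΦint
    _ = 0 := by rw [hmain]; simp
  set H : ℝ → ℝ → ℂ := fun y ξ => Complex.exp (↑ξ * ↑(x-y) * Complex.I) *
    ((Sker b (x-y) : ℂ) * Complex.exp (↑(ξ₀*(x-y)) * Complex.I)) with hH
  have stepA : ∀ y, Φ y = ∫ ξ, H y ξ ∂μb := by
    intro y
    rw [hΦ, hH]
    simp only
    rw [show ((Sker b (x-y):ℂ))^2 * Complex.exp (↑(ξ₀*(x-y)) * Complex.I)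
        = (∫ ξ in Set.Icc (-b) b, Complex.exp (↑ξ*↑(x-y)*Complex.I)) *
          ((Sker b (x-y):ℂ) * Complex.exp (↑(ξ₀*(x-y)) * Complex.I)) by
      rw [integral_exp_Icc b (x-y) hb]; ring]
    rw [← integral_mul_const]
  have hHmeas : Measurable (Function.uncurry H) := by
    rw [hH]
    apply Measurable.mul
    · exact Measurable.cexp (((Complex.measurable_ofReal.comp measurable_snd).mul
        (Complex.measurable_ofReal.comp (measurable_const.sub measurable_fst))).mul
        measurable_const)
    · apply Measurable.mul
      · exact Complex.measurable_ofReal.comp ((Sker_meas b).comp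
          (measurable_const.sub measurable_fst))
      · exact Measurable.cexp ((Complex.measurable_ofReal.comp
          ((measurable_const.sub measurable_fst).const_mul ξ₀)).mul measurable_const)
  have hHnorm : ∀ y ξ, ‖H y ξ‖ ≤ 2*b := by
    intro y ξ
    rw [hH]
    simp only [norm_mul]
    rw [norm_exp_rmul_I, one_mul,
      show ((↑(ξ₀*(x-y)):ℂ) * Complex.I) = ↑(ξ₀*(x-y)) * Complex.I from rfl,
      Complex.norm_exp_ofReal_mul_I, mul_one, Complex.norm_real, Real.norm_eq_abs]
    exact Sker_abs_le b _ hb.le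
  have hHint : Integrable (Function.uncurry H) (ρ.prod μb) := by
    apply Integrable.mono' (integrable_const (2*b)) hHmeas.aestronglyMeasurable
    filter_upwards with p
    exact hHnorm p.1 p.2
  simp_rw [stepA]
  rw [integral_integral_swap hHint]
  apply setIntegral_eq_zero_of_forall_eq_zero
  intro ξ hξ
  set K : ℝ → ℝ → ℂ := fun y η => Complex.exp (↑ξ * ↑(x-y) * Complex.I) *
    (Complex.exp (↑η * ↑(x-y) * Complex.I) * Complex.exp (↑(ξ₀*(x-y)) * Complex.I)) with hK
  have stepC : ∀ y, H y ξ = ∫ η, K y η ∂μb := by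
    intro y
    rw [hH, hK]
    simp only
    rw [← integral_exp_Icc b (x-y) hb, ← integral_mul_const, ← integral_const_mul]
  have hKmeas : Measurable (Function.uncurry K) := by
    rw [hK]
    apply Measurable.mul
    · exact Measurable.cexp ((measurable_const.mul
        (Complex.measurable_ofReal.comp (measurable_const.sub measurable_fst))).mul
        measurable_const)
    · apply Measurable.mul
      · exact Measurable.cexp (((Complex.measurable_ofReal.comp measurable_snd).mul
          (Complex.measurable_ofReal.comp (measurable_const.sub measurable_fst))).mul
          measurable_const)
      · exact Measurable.cexp ((Complex.measurable_ofReal.comp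
          ((measurable_const.sub measurable_fst).const_mul ξ₀)).mul measurable_const)
  have hKint : Integrable (Function.uncurry K) (ρ.prod μb) := by
    apply Integrable.mono' (integrable_const 1) hKmeas.aestronglyMeasurable
    filter_upwards with p
    show ‖K p.1 p.2‖ ≤ 1
    rw [hK]
    simp only [norm_mul]
    rw [norm_exp_rmul_I, norm_exp_rmul_I,
      show ((↑(ξ₀*(x-p.1)):ℂ) * Complex.I) = ↑(ξ₀*(x-p.1)) * Complex.I from rfl,
      Complex.norm_exp_ofReal_mul_I]
    norm_num
  simp_rw [stepC]
  rw [integral_integral_swap hKint]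
  apply setIntegral_eq_zero_of_forall_eq_zero
  intro η hη
  have hθ : ξ + η + ξ₀ ∈ Set.Icc (ξ₀-2*b) (ξ₀+2*b) := by
    simp only [Set.mem_Icc] at hξ hη ⊢
    constructor <;> linarith
  have hKsplit : ∀ y, K y η = Complex.exp (↑((ξ+η+ξ₀)*x) * Complex.I) *
      Complex.exp (-(↑(ξ+η+ξ₀) * ↑y) * Complex.I) := by
    intro y
    rw [hK]
    simp only
    rw [← Complex.exp_add, ← Complex.exp_add, ← Complex.exp_add]
    congr 1
    push_cast
    ring
  simp_rw [hKsplit]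
  rw [integral_const_mul, hvan _ hθ, mul_zero]

lemma conv_apply_lintegral (ρ : Measure ℝ) [IsProbabilityMeasure ρ]
    (f : ℝ → ℝ) (hf : Measurable f) {s : Set ℝ} (hs : MeasurableSet s) :
    ((volume.withDensity (fun x => ENNReal.ofReal (f x))).prod ρ).map
        (fun p : ℝ × ℝ => p.1 + p.2) s
      = ∫⁻ x in s, ∫⁻ y, ENNReal.ofReal (f (x-y)) ∂ρ ∂volume := by
  set m := volume.withDensity (fun x => ENNReal.ofReal (f x)) with hm
  have hfm : Measurable (fun x => ENNReal.ofReal (f x)) := hf.ennreal_ofReal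
  rw [Measure.map_apply (by fun_prop) hs]
  rw [Measure.prod_apply_symm (by
    exact (measurable_fst.add measurable_snd) hs)]
  have hpre : ∀ y : ℝ, ((fun x => (x, y)) ⁻¹' ((fun p : ℝ × ℝ => p.1 + p.2) ⁻¹' s))
      = (fun x => x + y) ⁻¹' s := by
    intro y; rfl
  have hmy : ∀ y : ℝ, m ((fun x => x + y) ⁻¹' s) = ∫⁻ x in s, ENNReal.ofReal (f (x-y)) ∂volume := by
    intro y
    rw [hm, withDensity_apply _ ((measurable_add_const y) hs)]
    have := (measurePreserving_add_right volume y).setLIntegral_comp_preimage_emb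
      (measurableEmbedding_addRight y) (fun x => ENNReal.ofReal (f (x - y))) s
    simp only [add_sub_cancel_right] at this
    exact this
  simp_rw [hpre, hmy]
  have hswap := lintegral_lintegral_swap (μ := ρ) (ν := volume.restrict s)
    (f := fun y x => ENNReal.ofReal (f (x - y)))
    (by apply Measurable.aemeasurable; fun_prop)
  exact hswap

/-- If the Fourier–Stieltjes transform `ρ̂(ξ) = ∫ e^{−iξx} dρ(x)` of a Borel probability measure
`ρ` on `ℝ` vanishes on a nonempty open set, then there exist two distinct Borel probability
measures `m₁ ≠ m₂` on `ℝ`, each absolutely continuous with respect to Lebesgue measure with an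
integrable density, such that `m₁ ∗ ρ = m₂ ∗ ρ` (convolution being the pushforward of the
product measure under addition). -/
theorem exists_distinct_with_equal_conv_of_fourier_vanishes
    (ρ : Measure ℝ) [IsProbabilityMeasure ρ]
    (hρ : ∃ U : Set ℝ, IsOpen U ∧ U.Nonempty ∧
      ∀ ξ ∈ U, (∫ x, Complex.exp (-(ξ * x) * Complex.I) ∂ρ) = 0) :
    ∃ (m₁ m₂ : Measure ℝ) (f₁ f₂ : ℝ → ℝ),
      IsProbabilityMeasure m₁ ∧ IsProbabilityMeasure m₂ ∧
      Integrable f₁ volume ∧ Integrable f₂ volume ∧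
      m₁ = volume.withDensity (fun x => ENNReal.ofReal (f₁ x)) ∧
      m₂ = volume.withDensity (fun x => ENNReal.ofReal (f₂ x)) ∧
      m₁ ≠ m₂ ∧
      (m₁.prod ρ).map (fun p : ℝ × ℝ => p.1 + p.2)
        = (m₂.prod ρ).map (fun p : ℝ × ℝ => p.1 + p.2) := by
  obtain ⟨U, hUopen, ⟨ξ₀, hξ₀U⟩, hUvan⟩ := hρ
  have hξ₀ne : ξ₀ ≠ 0 := by
    intro h
    have h0 := hUvan ξ₀ hξ₀U
    rw [h] at h0
    simp [measure_univ] at h0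
  obtain ⟨ε, hε, hball⟩ := Metric.isOpen_iff.mp hUopen ξ₀ hξ₀U
  set b := ε/5 with hbdef
  have hbpos : 0 < b := by positivity
  have hvan : ∀ θ ∈ Set.Icc (ξ₀-2*b) (ξ₀+2*b),
      (∫ y, Complex.exp (-(↑θ * ↑y) * Complex.I) ∂ρ) = 0 := by
    intro θ hθ
    apply hUvan
    apply hball
    rw [Metric.mem_ball, Real.dist_eq]
    rw [Set.mem_Icc] at hθ
    rw [abs_lt]
    constructor <;> [linarith; linarith]
  -- densities
  set g : ℝ → ℝ := fun t => (Sker b t)^2 with hg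
  have hgint : Integrable g volume := Sker_sq_integrable b hbpos.le
  have hgpos : 0 < ∫ t, g t := Sker_sq_integral_pos b hbpos
  set c := (∫ t, g t)⁻¹ with hcdef
  have hcpos : 0 < c := inv_pos.mpr hgpos
  set f₁ : ℝ → ℝ := fun t => c * g t with hf₁
  set f₂ : ℝ → ℝ := fun t => f₁ t * (1 + Real.cos (ξ₀*t)) with hf₂
  have hcosmeas : Measurable (fun t : ℝ => Real.cos (ξ₀*t)) :=
    Real.measurable_cos.comp (measurable_id.const_mul ξ₀)
  have hf₁meas : Measurable f₁ := ((Sker_meas b).pow_const 2).const_mul c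
  have hf₂meas : Measurable f₂ := hf₁meas.mul (measurable_const.add hcosmeas)
  have hf₁nn : ∀ t, 0 ≤ f₁ t := fun t => mul_nonneg hcpos.le (sq_nonneg _)
  have hf₂nn : ∀ t, 0 ≤ f₂ t := by
    intro t
    apply mul_nonneg (hf₁nn t)
    have := Real.neg_one_le_cos (ξ₀*t)
    linarith
  have hf₁bd : ∀ t, f₁ t ≤ c * (2*b)^2 := by
    intro t
    exact mul_le_mul_of_nonneg_left (Sker_sq_le_bound b t hbpos.le) hcpos.le
  have hf₂bd : ∀ t, f₂ t ≤ 2 * (c * (2*b)^2) := by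
    intro t
    have h1 := hf₁bd t
    have h2 := Real.cos_le_one (ξ₀*t)
    have h3 := hf₁nn t
    calc f₂ t = f₁ t * (1 + Real.cos (ξ₀*t)) := rfl
    _ ≤ f₁ t * 2 := by nlinarith
    _ ≤ 2 * (c * (2*b)^2) := by nlinarith
  have hf₁int : Integrable f₁ volume := hgint.const_mul c
  have hf₂int : Integrable f₂ volume := by
    apply Integrable.mono' (hf₁int.const_mul 2) hf₂meas.aestronglyMeasurable
    filter_upwards with t
    rw [Real.norm_eq_abs, _root_.abs_of_nonneg (hf₂nn t)]
    have h2 := Real.cos_le_one (ξ₀*t)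
    have h3 := hf₁nn t
    calc f₂ t = f₁ t * (1 + Real.cos (ξ₀*t)) := rfl
    _ ≤ f₁ t * 2 := by nlinarith
    _ = 2 * f₁ t := by ring
  have hint₁ : ∫ t, f₁ t = 1 := by
    rw [hf₁]
    rw [integral_const_mul]
    rw [hcdef]
    exact inv_mul_cancel₀ (ne_of_gt hgpos)
  -- integrability of slices over ρ
  have hslice₁ : ∀ x : ℝ, Integrable (fun y => f₁ (x-y)) ρ := by
    intro x
    apply Integrable.mono' (integrable_const (c * (2*b)^2))
      ((hf₁meas.comp (measurable_const.sub measurable_id)).aestronglyMeasurable)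
    filter_upwards with y
    show ‖f₁ (x - y)‖ ≤ c * (2*b)^2
    rw [Real.norm_eq_abs, _root_.abs_of_nonneg (hf₁nn _)]
    exact hf₁bd _
  have hslice₂ : ∀ x : ℝ, Integrable (fun y => f₂ (x-y)) ρ := by
    intro x
    apply Integrable.mono' (integrable_const (2 * (c * (2*b)^2)))
      ((hf₂meas.comp (measurable_const.sub measurable_id)).aestronglyMeasurable)
    filter_upwards with y
    show ‖f₂ (x - y)‖ ≤ 2 * (c * (2*b)^2)
    rw [Real.norm_eq_abs, _root_.abs_of_nonneg (hf₂nn _)]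
    exact hf₂bd _
  -- key equality of convolution densities
  have key3 : ∀ x : ℝ, ∫ y, f₂ (x-y) ∂ρ = ∫ y, f₁ (x-y) ∂ρ := by
    intro x
    have hsplit : ∀ y : ℝ, f₂ (x-y) = f₁ (x-y) + c * ((Sker b (x-y))^2 * Real.cos (ξ₀*(x-y))) := by
      intro y
      rw [hf₂, hf₁]
      simp only
      ring
    simp_rw [hsplit]
    rw [integral_add (hslice₁ x) (by
      have : (fun y => c * ((Sker b (x-y))^2 * Real.cos (ξ₀*(x-y))))
          = fun y => f₂ (x-y) - f₁ (x-y) := by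
        funext y
        rw [hsplit y]; ring
      rw [this]
      exact (hslice₂ x).sub (hslice₁ x))]
    rw [integral_const_mul]
    have hz : ∫ a, c * (Sker b (x - a) ^ 2 * Real.cos (ξ₀ * (x - a))) ∂ρ = 0 := by
      rw [integral_const_mul, key_conv_zero ρ b ξ₀ hbpos hvan x, mul_zero]
    rw [hz, add_zero]
  -- ∫ f₂ = 1 via Fubini
  set D : ℝ → ℝ := fun t => c * ((Sker b t)^2 * Real.cos (ξ₀*t)) with hDdef
  have hDeq : ∀ t, D t = f₂ t - f₁ t := by
    intro t
    rw [hDdef, hf₂, hf₁]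
    simp only
    ring
  have hDmeas : Measurable D := (((Sker_meas b).pow_const 2).mul hcosmeas).const_mul c
  have hDint : Integrable D volume := by
    have : D = fun t => f₂ t - f₁ t := funext hDeq
    rw [this]
    exact hf₂int.sub hf₁int
  have hDzero : ∀ x : ℝ, ∫ y, D (x-y) ∂ρ = 0 := by
    intro x
    have hb2 : ∀ y, D (x - y) = c * (Sker b (x-y)^2 * Real.cos (ξ₀*(x-y))) := fun y => rfl
    simp_rw [hb2]
    rw [integral_const_mul, key_conv_zero ρ b ξ₀ hbpos hvan x, mul_zero]
  have hDprod : Integrable (fun p : ℝ × ℝ => D (p.1 - p.2)) (volume.prod ρ) := by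
    have hm : AEStronglyMeasurable (fun p : ℝ × ℝ => D (p.1 - p.2)) (volume.prod ρ) :=
      (hDmeas.comp (measurable_fst.sub measurable_snd)).aestronglyMeasurable
    rw [integrable_prod_iff' hm]
    constructor
    · filter_upwards with y
      exact hDint.comp_sub_right y
    · apply Integrable.congr (integrable_const (∫ t, ‖D t‖))
      filter_upwards with y
      exact (integral_sub_right_eq_self (fun t => ‖D t‖) y).symm
  have hDint0 : ∫ t, D t = 0 := by
    have hswap := integral_integral_swap (μ := (volume : Measure ℝ)) (ν := ρ)
      (f := fun x y => D (x - y)) hDprod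
    have hL : ∫ x, ∫ y, D (x-y) ∂ρ ∂volume = 0 := by
      simp_rw [hDzero]
      simp
    rw [hL] at hswap
    have hR : ∫ y, ∫ x, D (x-y) ∂volume ∂ρ = ∫ t, D t := by
      have : ∀ y : ℝ, ∫ x, D (x-y) ∂volume = ∫ t, D t := fun y =>
        integral_sub_right_eq_self D y
      simp_rw [this]
      simp [measure_univ]
    rw [hR] at hswap
    exact hswap.symm
  have hint₂ : ∫ t, f₂ t = 1 := by
    have : ∀ t, f₂ t = f₁ t + D t := by intro t; rw [hDeq]; ring
    rw [funext this, integral_add hf₁int hDint, hint₁, hDint0, add_zero]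
  -- the measures
  set m₁ := volume.withDensity (fun x => ENNReal.ofReal (f₁ x)) with hm₁
  set m₂ := volume.withDensity (fun x => ENNReal.ofReal (f₂ x)) with hm₂
  have hprob₁ : IsProbabilityMeasure m₁ := by
    constructor
    rw [hm₁, withDensity_apply _ MeasurableSet.univ, Measure.restrict_univ,
      ← ofReal_integral_eq_lintegral_ofReal hf₁int (Filter.Eventually.of_forall hf₁nn),
      hint₁, ENNReal.ofReal_one]
  have hprob₂ : IsProbabilityMeasure m₂ := by
    constructor
    rw [hm₂, withDensity_apply _ MeasurableSet.univ, Measure.restrict_univ,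
      ← ofReal_integral_eq_lintegral_ofReal hf₂int (Filter.Eventually.of_forall hf₂nn),
      hint₂, ENNReal.ofReal_one]
  -- m₁ ≠ m₂
  have hne : m₁ ≠ m₂ := by
    set A : Set ℝ := {x | 0 < f₁ x ∧ Real.cos (ξ₀*x) < 0} with hA
    have hAmeas : MeasurableSet A :=
      (measurableSet_lt measurable_const hf₁meas).inter
        (measurableSet_lt hcosmeas measurable_const)
    have hcopen : IsOpen {x : ℝ | Real.cos (ξ₀*x) < 0} :=
      isOpen_lt (Real.continuous_cos.comp (continuous_const.mul continuous_id)) continuous_const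
    have hx₀mem : Real.pi/ξ₀ ∈ {x : ℝ | Real.cos (ξ₀*x) < 0} := by
      simp only [Set.mem_setOf_eq]
      rw [mul_div_cancel₀ _ hξ₀ne, Real.cos_pi]
      norm_num
    obtain ⟨δ, hδpos, hδball⟩ := Metric.isOpen_iff.mp hcopen _ hx₀mem
    set Z : Set ℝ := {x | Real.sin (b*x) = 0} with hZ
    have hZcount : Z.Countable := by
      have hsub : Z ⊆ Set.range (fun n : ℤ => n * Real.pi / b) := by
        intro x hx
        rw [hZ, Set.mem_setOf_eq, Real.sin_eq_zero_iff] at hx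
        obtain ⟨n, hn⟩ := hx
        refine ⟨n, ?_⟩
        field_simp
        linarith [hn]
      exact (Set.countable_range _).mono hsub
    have hBsub : Metric.ball (Real.pi/ξ₀) δ \ Z ⊆ A := by
      rintro x ⟨hxball, hxZ⟩
      have hcos : Real.cos (ξ₀*x) < 0 := hδball hxball
      have hxne : x ≠ 0 := by
        intro h
        rw [h, mul_zero, Real.cos_zero] at hcos
        linarith
      have hsinne : Real.sin (b*x) ≠ 0 := by
        intro h
        exact hxZ (by rw [hZ]; exact h)
      constructor
      · show 0 < f₁ x
        have hSne : Sker b x ≠ 0 := by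
          unfold Sker
          rw [if_neg hxne]
          exact div_ne_zero (mul_ne_zero two_ne_zero hsinne) hxne
        show 0 < c * (Sker b x)^2
        exact mul_pos hcpos (pow_two_pos_of_ne_zero hSne)
      · exact hcos
    have hAvol : 0 < volume A := by
      have hzero : volume Z = 0 := hZcount.measure_zero _
      have hball0 : 0 < volume (Metric.ball (Real.pi/ξ₀) δ \ Z) := by
        rw [measure_diff_null hzero]
        exact Metric.measure_ball_pos _ _ hδpos
      exact lt_of_lt_of_le hball0 (measure_mono hBsub)
    have hdiffpos : 0 < ∫ x in A, (f₁ x - f₂ x) ∂volume := by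
      rw [setIntegral_pos_iff_support_of_nonneg_ae ?hnn ?hint]
      case hnn =>
        rw [Filter.EventuallyLE, ae_restrict_iff' hAmeas]
        filter_upwards with x hx
        obtain ⟨h1, h2⟩ := hx
        have he : f₂ x = f₁ x * (1 + Real.cos (ξ₀*x)) := rfl
        simp only [Pi.zero_apply]
        nlinarith
      case hint => exact (hf₁int.sub hf₂int).integrableOn
      refine lt_of_lt_of_le hAvol (measure_mono ?_)
      intro x hx
      refine ⟨?_, hx⟩
      obtain ⟨h1, h2⟩ := hx
      rw [Function.mem_support]
      have he : f₂ x = f₁ x * (1 + Real.cos (ξ₀*x)) := rfl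
      have hpos : 0 < f₁ x - f₂ x := by nlinarith
      exact ne_of_gt hpos
    have hlt : ∫ x in A, f₂ x ∂volume < ∫ x in A, f₁ x ∂volume := by
      have hsubint := integral_sub (hf₁int.integrableOn (s := A)) (hf₂int.integrableOn (s := A))
      rw [hsubint] at hdiffpos
      linarith
    intro heq
    have hAeq : m₁ A = m₂ A := by rw [heq]
    rw [hm₁, hm₂, withDensity_apply _ hAmeas, withDensity_apply _ hAmeas,
      ← ofReal_integral_eq_lintegral_ofReal hf₁int.integrableOn (ae_of_all _ hf₁nn),
      ← ofReal_integral_eq_lintegral_ofReal hf₂int.integrableOn (ae_of_all _ hf₂nn)] at hAeq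
    have hne' := (ENNReal.ofReal_lt_ofReal_iff_of_nonneg
      (setIntegral_nonneg hAmeas (fun x _ => hf₂nn x))).mpr hlt
    exact absurd hAeq (ne_of_gt hne')
  refine ⟨m₁, m₂, f₁, f₂, hprob₁, hprob₂, hf₁int, hf₂int, hm₁, hm₂, hne, ?_⟩
  ext s hs
  rw [hm₁, hm₂, conv_apply_lintegral ρ f₁ hf₁meas hs, conv_apply_lintegral ρ f₂ hf₂meas hs]
  apply lintegral_congr
  intro x
  rw [← ofReal_integral_eq_lintegral_ofReal (hslice₁ x) (ae_of_all _ (fun y => hf₁nn _)),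
      ← ofReal_integral_eq_lintegral_ofReal (hslice₂ x) (ae_of_all _ (fun y => hf₂nn _)),
      key3 x]
end

section
/- Let 𝕋 = {z ∈ ℂ : |z| = 1} be the circle group with normalized Haar (probability) measure μ, and let ρ be a Borel probability measure on 𝕋. Then for every Borel set X ⊆ 𝕋 and every integer k ∈ ℤ: ∫_𝕋 z^k · ρ(z⁻¹X) dμ(z) = (∫_𝕋 y^{−k} dρ(y)) · (∫_X z^k dμ(z)). -/
/-!
Writing `ρ(z⁻¹X) = ∫ 1_X(zy) dρ(y)` and exchanging the order of integration (Fubini), the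
right invariance of Haar measure turns the inner integral into `∫_X χ(z y⁻¹) dμ(z)`
for `χ(z) = z^k`; since `χ` is a character this factors as `χ(y⁻¹) ∫_X χ dμ`.
-/

open MeasureTheory

/-- The Borel σ-algebra on the circle group `𝕋`. -/
noncomputable instance : MeasurableSpace Circle := borel Circle

instance : BorelSpace Circle := ⟨rfl⟩

section

variable {G E : Type*} [Group G] [MeasurableSpace G] [MeasurableMul₂ G]
  [NormedAddCommGroup E] [NormedSpace ℝ E] [CompleteSpace E]

theorem integral_measureReal_preimage_mul_left_smul (μ ρ : Measure G) [SFinite μ]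
    [μ.IsMulRightInvariant] [IsFiniteMeasure ρ] {X : Set G} (hX : MeasurableSet X)
    {f : G → E} (hf : Integrable f μ) :
    ∫ z, ρ.real ((z * ·) ⁻¹' X) • f z ∂μ = ∫ y, ∫ z in X, f (z * y⁻¹) ∂μ ∂ρ := by
  set F : G × G → E := ((fun p => p.1 * p.2) ⁻¹' X).indicator (fun p => f p.1)
  have hF : Integrable F (μ.prod ρ) :=
    (hf.comp_fst ρ).indicator (hX.preimage measurable_mul)
  have inner_left (z : G) : ρ.real ((z * ·) ⁻¹' X) • f z = ∫ y, F (z, y) ∂ρ := by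
    rw [← integral_indicator_const _ (hX.preimage (measurable_const_mul z))]
    rfl
  have inner_right (y : G) : ∫ z, F (z, y) ∂μ = ∫ z in X, f (z * y⁻¹) ∂μ := by
    rw [← integral_mul_right_eq_self _ y⁻¹, ← integral_indicator hX]
    congr 1 with z
    by_cases hz : z ∈ X <;> simp [F, hz]
  simp_rw [inner_left, ← inner_right]
  exact integral_integral_swap (f := fun z y => F (z, y)) hF

theorem integral_measureReal_preimage_mul_left_smul_character (μ ρ : Measure G)
    [IsFiniteMeasure μ] [μ.IsMulRightInvariant] [IsFiniteMeasure ρ] {X : Set G}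
    (hX : MeasurableSet X) (χ : G →* Circle) (hχ : Measurable χ) :
    ∫ z, ρ.real ((z * ·) ⁻¹' X) • (χ z : ℂ) ∂μ
      = (∫ y, (χ y⁻¹ : ℂ) ∂ρ) * ∫ z in X, (χ z : ℂ) ∂μ := by
  have hχ_int : Integrable (fun z => (χ z : ℂ)) μ :=
    Integrable.of_bound (by fun_prop : Measurable fun z => (χ z : ℂ)).aestronglyMeasurable 1
      (.of_forall fun z => (Circle.norm_coe _).le)
  simp only [integral_measureReal_preimage_mul_left_smul μ ρ hX hχ_int, map_mul, Circle.coe_mul,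
    integral_mul_const, integral_const_mul]
  ring

end

theorem circle_integral_translate_eq_general
    (μ : Measure Circle) [μ.IsHaarMeasure]
    (ρ : Measure Circle) [IsProbabilityMeasure ρ]
    (X : Set Circle) (hX : MeasurableSet X) (k : ℤ) :
    (∫ z : Circle, ((z : ℂ) ^ k) * ((ρ ((fun x => z * x) ⁻¹' X)).toReal : ℂ) ∂μ)
      = (∫ y : Circle, ((y : ℂ) ^ (-k)) ∂ρ) * ∫ z in X, ((z : ℂ) ^ k) ∂μ := by
  have h := integral_measureReal_preimage_mul_left_smul_character μ ρ hX (zpowGroupHom k)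
    (continuous_zpow k).measurable
  simp only [zpowGroupHom_apply, Circle.coe_zpow, inv_zpow', Complex.real_smul] at h
  simp only [mul_comm _ (Complex.ofReal _)]
  exact h

/-- Let `𝕋` be the circle group with its normalized Haar (probability) measure `μ` and `ρ`
a Borel probability measure on `𝕋`. For every Borel `X ⊆ 𝕋` and `k ∈ ℤ`:
`∫ z^k ρ(z⁻¹X) dμ(z) = (∫ y^{−k} dρ(y)) (∫_X z^k dμ(z))`. -/
theorem circle_integral_translate_eq
    (μ : Measure Circle) [μ.IsHaarMeasure] [IsProbabilityMeasure μ]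
    (ρ : Measure Circle) [IsProbabilityMeasure ρ]
    (X : Set Circle) (hX : MeasurableSet X) (k : ℤ) :
    (∫ z : Circle, ((z : ℂ) ^ k) * ((ρ ((fun x => z * x) ⁻¹' X)).toReal : ℂ) ∂μ)
      = (∫ y : Circle, ((y : ℂ) ^ (-k)) ∂ρ) * ∫ z in X, ((z : ℂ) ^ k) ∂μ :=
  circle_integral_translate_eq_general μ ρ X hX k
end
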